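/- arXiv:2407.09463 — 3 statements merged into one kernel-verified Lean document; each statement's English description precedes it below -/
import Mathlib

section
/- Suppose Alice makes progress in at most N'/2 iterations, Bob's insertions occur only at the first or last iteration of multi-iteration sequences, each such sequence contains exactly two insertions, sequences where Alice inserts last contain exactly one Bob-insertion, and every sequence where Bob inserts at the last iteration has at least one bit flip in that iteration. If f bit flips occur overall, then the total number of iterations with progress is at most N' + 2f. -/
/-! Every Bob-insertion is charged within its sequence. If the sequence ends with a Bob-insertion,
its at most two Bob-insertions are paid for by the bit flip in that last iteration. Otherwise Bob
can insert only at the first iteration, hence at most once, and the other insertion of the sequence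
is Alice's, which is an Alice-progress iteration. So the Bob-insertions number at most the
Alice-progress iterations plus `2f`, and the progress iterations at most `2 · N'/2 + 2f`. -/

/-- An iteration of the execution, labeled by whether Alice makes progress,
whether Bob inserts, whether Alice inserts, and the number of bit flips
occurring in it. -/
structure IterLabel where
  aliceProgress : Bool
  bobInserts : Bool
  aliceInserts : Bool
  flips : ℕ

namespace List

variable {α : Type*}

theorem countP_or_le_add (p q : α → Bool) (l : List α) :
    l.countP (fun x => p x || q x) ≤ l.countP p + l.countP q := by
  induction l with
  | nil => simp
  | cons a t ih =>
    simp only [countP_cons]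
    cases p a <;> cases q a <;> simp <;> omega

theorem countP_le_one_of_getElem {p : α → Bool} {l : List α}
    (h : ∀ k (hk : k < l.length), p l[k] → k = 0) : l.countP p ≤ 1 := by
  cases l with
  | nil => simp
  | cons a t =>
    have htail : t.countP p = 0 := by
      refine countP_eq_zero.mpr fun x hx hpx => ?_
      obtain ⟨k, hk, rfl⟩ := mem_iff_getElem.mp hx
      exact k.succ_ne_zero (h (k + 1) (by simpa using hk) hpx)
    rw [countP_cons, htail]
    split <;> simp

theorem countP_le_one_of_getElem_of_getLast {p : α → Bool} {l : List α}
    (hends : ∀ k (hk : k < l.length), p l[k] → k = 0 ∨ k = l.length - 1)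
    (hlast : ∀ hl : l ≠ [], p (l.getLast hl) = false) : l.countP p ≤ 1 := by
  rcases eq_or_ne l [] with rfl | hl
  · simp
  rw [← dropLast_append_getLast hl, countP_append, countP_singleton, hlast hl]
  refine countP_le_one_of_getElem fun k hk hpk => ?_
  have hk' : k < l.length - 1 := by simpa using hk
  rw [getElem_dropLast] at hpk
  have := hends k (by omega) hpk
  omega

end List

namespace IterLabel

open List

theorem countP_bobInserts_le (b : List IterLabel)
    (hAliceInsProg : ∀ x ∈ b, x.aliceInserts → x.aliceProgress)
    (hBobPos : ∀ k (hk : k < b.length), b[k].bobInserts → k = 0 ∨ k = b.length - 1)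
    (hTwo : b.countP (fun x => x.bobInserts || x.aliceInserts) ≠ 0 →
      b.countP (fun x => x.bobInserts || x.aliceInserts) = 2)
    (hType2 : ∀ hb : b ≠ [], (b.getLast hb).bobInserts → 1 ≤ (b.getLast hb).flips) :
    b.countP (·.bobInserts) ≤ b.countP (·.aliceProgress) + 2 * (b.map (·.flips)).sum := by
  have hBob_le : b.countP (·.bobInserts) ≤ b.countP (fun x => x.bobInserts || x.aliceInserts) :=
    countP_mono_left fun x _ hx => by simp [hx]
  by_cases hnone : b.countP (fun x => x.bobInserts || x.aliceInserts) = 0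
  · omega
  have htwo := hTwo hnone
  have hb : b ≠ [] := by rintro rfl; simp at hnone
  cases hlast : (b.getLast hb).bobInserts
  case true =>
    have hflips : 1 ≤ (b.map (·.flips)).sum :=
      (hType2 hb hlast).trans (le_sum_of_mem (mem_map_of_mem (getLast_mem hb)))
    omega
  case false =>
    have hBob_one : b.countP (·.bobInserts) ≤ 1 :=
      countP_le_one_of_getElem_of_getLast hBobPos fun _ => hlast
    have hAlice : 0 < b.countP (·.aliceInserts) := by
      have := countP_or_le_add (·.bobInserts) (·.aliceInserts) b
      omega
    obtain ⟨x, hx, hxins⟩ := countP_pos_iff.mp hAlice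
    have : 0 < b.countP (·.aliceProgress) :=
      countP_pos_iff.mpr ⟨x, hx, hAliceInsProg x hx hxins⟩
    omega

theorem countP_flatten_bobInserts_le (S : List (List IterLabel))
    (h : ∀ b ∈ S,
      b.countP (·.bobInserts) ≤ b.countP (·.aliceProgress) + 2 * (b.map (·.flips)).sum) :
    S.flatten.countP (·.bobInserts) ≤
      S.flatten.countP (·.aliceProgress) + 2 * (S.flatten.map (·.flips)).sum := by
  simp only [countP_flatten, map_flatten, sum_flatten, map_map, ← sum_map_mul_left,
    ← sum_map_add]
  exact sum_le_sum h

end IterLabel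

theorem stmt15_general (N' f : ℕ) (S : List (List IterLabel))
    (hA : 2 * ((S.flatten).countP (fun x => x.aliceProgress)) ≤ N')
    (hAliceInsProg : ∀ x ∈ S.flatten, x.aliceInserts → x.aliceProgress)
    (hBobPos : ∀ b ∈ S, ∀ k, ∀ h : k < b.length,
      (b.get ⟨k, h⟩).bobInserts → 2 ≤ b.length ∧ (k = 0 ∨ k = b.length - 1))
    (hTwo : ∀ b ∈ S, b.countP (fun x => x.bobInserts || x.aliceInserts) ≠ 0 →
      b.countP (fun x => x.bobInserts || x.aliceInserts) = 2)
    (hType2 : ∀ b ∈ S, ∀ hb : b ≠ [], (b.getLast hb).bobInserts →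
      1 ≤ (b.getLast hb).flips)
    (hf : ((S.flatten).map (fun x => x.flips)).sum = f) :
    (S.flatten).countP (fun x => x.aliceProgress || x.bobInserts) ≤ N' + 2 * f := by
  have hBob := IterLabel.countP_flatten_bobInserts_le S fun b hb =>
    IterLabel.countP_bobInserts_le b
      (fun x hx => hAliceInsProg x (List.mem_flatten.mpr ⟨b, hb, hx⟩))
      (fun k hk hbob => (hBobPos b hb k hk hbob).2) (hTwo b hb) (hType2 b hb)
  have hProgress := List.countP_or_le_add (·.aliceProgress) (·.bobInserts) S.flatten
  omega

/-- if Alice makes progress in at most `N'/2` iterations, Bob's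
insertions occur only at the first or last iteration of multi-iteration
sequences, each sequence containing an insertion contains exactly two
insertions, sequences where Alice inserts at the last iteration contain
exactly one Bob-insertion, every sequence where Bob inserts at the last
iteration has at least one bit flip in that iteration, and `f` bit flips occur
overall, then the total number of iterations with progress is at most
`N' + 2f`. -/
theorem stmt15 (N' f : ℕ) (S : List (List IterLabel))
    (hA : 2 * ((S.flatten).countP (fun x => x.aliceProgress)) ≤ N')
    (hAliceInsProg : ∀ x ∈ S.flatten, x.aliceInserts → x.aliceProgress)
    (hProgress : ∀ x ∈ S.flatten, x.aliceInserts || x.bobInserts → x.aliceProgress || x.bobInserts)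
    (hBobPos : ∀ b ∈ S, ∀ k, ∀ h : k < b.length,
      (b.get ⟨k, h⟩).bobInserts → 2 ≤ b.length ∧ (k = 0 ∨ k = b.length - 1))
    (hTwo : ∀ b ∈ S, b.countP (fun x => x.bobInserts || x.aliceInserts) ≠ 0 →
      b.countP (fun x => x.bobInserts || x.aliceInserts) = 2)
    (hType1 : ∀ b ∈ S, ∀ hb : b ≠ [], (b.getLast hb).aliceInserts →
      b.countP (fun x => x.bobInserts) = 1)
    (hType2 : ∀ b ∈ S, ∀ hb : b ≠ [], (b.getLast hb).bobInserts →
      1 ≤ (b.getLast hb).flips)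
    (hf : ((S.flatten).map (fun x => x.flips)).sum = f) :
    (S.flatten).countP (fun x => x.aliceProgress || x.bobInserts) ≤ N' + 2 * f :=
  stmt15_general N' f S hA hAliceInsProg hBobPos hTwo hType2 hf
end

section
/- Let |Π| and N' be positive integers with N' ≤ |Π|, let C ∈ (0,1), and set p_i = min{C·N'/i², 1/2}, k_i = ⌈log₂(1/p_i)⌉ + 1. Then ∑_{i=1}^{|Π|} 3·k_i ≤ 6·|Π| + 3·√(2·C·N') + 3·|Π|·log₂(|Π|² / (C·N')). -/
/-!
With `L = log₂(|Π|²/(C N'))` we have `1/p_i = max(i²/(C N'), 2)`, so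
`k_i = max(⌈log₂(i²/(C N'))⌉, 1) + 1`, and both entries of the maximum are at most `L + 1`:
the first because `i ≤ |Π|`, the second because `C N' < N' ≤ |Π|²` gives `L ≥ 0`.
Thus `3 k_i ≤ 6 + 3L` for every `i`. The `√(2CN')` term, which pays for the estimate
`k_i ≤ log₂(1/p_i) + 2` at the indices with `p_i = 1/2`, is not needed since `⌈1⌉ = 1`.
-/

open Real

lemma logb_two_one_div_min_half {x : ℝ} (hx : 0 < x) :
    logb 2 (1 / min x (1 / 2)) = max (logb 2 (1 / x)) 1 := by
  have hlog2 : logb 2 2 = 1 := logb_self_eq_one one_lt_two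
  rcases le_total x (1 / 2) with hle | hle
  · have : 2 ≤ 1 / x := by rw [le_div_iff₀ hx]; linarith
    rw [min_eq_left hle,
      max_eq_left (hlog2.symm.le.trans (logb_le_logb_of_le one_lt_two two_pos this))]
  · have : 1 / x ≤ 2 := by rw [div_le_iff₀ hx]; linarith
    rw [min_eq_right hle,
      max_eq_right ((logb_le_logb_of_le one_lt_two (by positivity) this).trans hlog2.le)]
    norm_num [hlog2]

lemma ceil_logb_two_one_div_min_half_add_one_le {x L : ℝ} (hx : 0 < x) (hL : 0 ≤ L)
    (h : logb 2 (1 / x) ≤ L) :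
    ((⌈logb 2 (1 / min x (1 / 2))⌉ + 1 : ℤ) : ℝ) ≤ L + 2 := by
  rw [logb_two_one_div_min_half hx, Int.ceil_mono.map_max, Int.ceil_one]
  have := Int.ceil_lt_add_one (logb 2 (1 / x))
  push_cast
  rcases le_total (⌈logb 2 (1 / x)⌉ : ℝ) 1 with h1 | h1
  · rw [max_eq_right h1]; linarith
  · rw [max_eq_left h1]; linarith

lemma mul_le_sq_of_le_one {C : ℝ} {n P : ℕ} (hC : C ≤ 1) (hn : 0 < n) (hnP : n ≤ P) :
    C * n ≤ (P : ℝ) ^ 2 := by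
  have hP : (1 : ℝ) ≤ P := by exact_mod_cast hn.trans_le hnP
  have : (n : ℝ) ≤ P := by exact_mod_cast hnP
  nlinarith

theorem stmt17_general (P N' : ℕ) (hN' : 0 < N') (hle : N' ≤ P)
    (C : ℝ) (hC : C ∈ Set.Ioo (0 : ℝ) 1)
    (p : ℕ → ℝ) (hp : ∀ i : ℕ, p i = min (C * (N' : ℝ) / (i : ℝ) ^ 2) (1 / 2))
    (k : ℕ → ℤ) (hk : ∀ i : ℕ, k i = ⌈Real.logb 2 (1 / p i)⌉ + 1) :
    (∑ i ∈ Finset.Icc 1 P, 3 * ((k i : ℝ))) ≤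
      6 * (P : ℝ) + 3 * Real.sqrt (2 * C * (N' : ℝ)) +
        3 * (P : ℝ) * Real.logb 2 ((P : ℝ) ^ 2 / (C * (N' : ℝ))) := by
  set L := logb 2 ((P : ℝ) ^ 2 / (C * N'))
  have hCN : 0 < C * N' := mul_pos hC.1 (by exact_mod_cast hN')
  have hL : 0 ≤ L := logb_nonneg one_lt_two <|
    (one_le_div hCN).2 (mul_le_sq_of_le_one hC.2.le hN' hle)
  have hterm : ∀ i ∈ Finset.Icc 1 P, 3 * (k i : ℝ) ≤ 6 + 3 * L := by
    intro i hi
    obtain ⟨hi1, hiP⟩ := Finset.mem_Icc.1 hi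
    have hi0 : (0 : ℝ) < i := by exact_mod_cast hi1
    have hlog : logb 2 (1 / (C * N' / i ^ 2)) ≤ logb 2 ((P : ℝ) ^ 2 / (C * N')) := by
      rw [one_div_div]
      gcongr
      exact one_lt_two
    have := ceil_logb_two_one_div_min_half_add_one_le (by positivity) hL hlog
    rw [hk, hp]
    linarith
  calc (∑ i ∈ Finset.Icc 1 P, 3 * (k i : ℝ))
      ≤ ∑ _i ∈ Finset.Icc 1 P, (6 + 3 * L) := Finset.sum_le_sum hterm
    _ = 6 * P + 3 * P * L := by
      simp only [Finset.sum_const, Nat.card_Icc, add_tsub_cancel_right, smul_add, nsmul_eq_mul]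
      ring
    _ ≤ _ := by linarith [sqrt_nonneg (2 * C * N')]

theorem stmt17 (P N' : ℕ) (hP : 0 < P) (hN' : 0 < N') (hle : N' ≤ P)
    (C : ℝ) (hC : C ∈ Set.Ioo (0 : ℝ) 1)
    (p : ℕ → ℝ) (hp : ∀ i : ℕ, p i = min (C * (N' : ℝ) / (i : ℝ) ^ 2) (1 / 2))
    (k : ℕ → ℤ) (hk : ∀ i : ℕ, k i = ⌈Real.logb 2 (1 / p i)⌉ + 1) :
    (∑ i ∈ Finset.Icc 1 P, 3 * ((k i : ℝ))) ≤
      6 * (P : ℝ) + 3 * Real.sqrt (2 * C * (N' : ℝ)) +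
        3 * (P : ℝ) * Real.logb 2 ((P : ℝ) ^ 2 / (C * (N' : ℝ))) :=
  stmt17_general P N' hN' hle C hC p hp k hk
end

section
/- Consider a binary code of length 5 where 0 is encoded uniformly at random as one of {00000, 10000, 01000} and 1 uniformly as one of {00100, 10010, 01001}; decoding maps a word to 0 or 1 if it lies in the respective set and to ⊥ (erasure) otherwise. Then for every nonzero error pattern Δ ∈ {0,1}^5 and every input bit b, the probability (over the uniform choice of codeword for b) that the received word (codeword XOR Δ) decodes to a valid codeword (i.e., not ⊥) is at most 2/3; equivalently, the decoded result is ⊥ with probability at least 1/3. -/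
/-! Both codeword triples sit inside the six valid words, and no nonzero translate of either
triple does (a finite check over the 31 nonzero patterns), so for every nonzero error pattern
some codeword of `b` is pushed off the valid words and decodes to an erasure. One such
codeword out of three gives both bounds. -/

/-- The three codewords of the bit `b` in the random length-5 code:
`0 ↦ {00000, 10000, 01000}` and `1 ↦ {00100, 10010, 01001}`. -/
def enc5 (b : Bool) : Finset (Fin 5 → Bool) :=
  if b then
    {![false, false, true, false, false],
     ![true, false, false, true, false],
     ![false, true, false, false, true]}
  else
    {![false, false, false, false, false],
     ![true, false, false, false, false],
     ![false, true, false, false, false]}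

/-- Decoding: a word decodes to `b` if it is one of the codewords of `b`,
and to an erasure (`none`) otherwise. -/
def dec5 (w : Fin 5 → Bool) : Option Bool :=
  if w ∈ enc5 false then some false
  else if w ∈ enc5 true then some true
  else none

open Finset

lemma card_enc5 (b : Bool) : #(enc5 b) = 3 := by
  cases b <;> rfl

lemma exists_mem_enc5_dec5_xor_eq_none (Δ : Fin 5 → Bool) (hΔ : Δ ≠ fun _ => false)
    (b : Bool) : ∃ c ∈ enc5 b, dec5 (fun i => xor (c i) (Δ i)) = none := by
  revert Δ b
  decide

/-- for every nonzero error pattern `Δ` and every input bit `b`,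
the probability over the uniform choice of one of the three codewords of `b`
that the received word (codeword XOR `Δ`) decodes to a valid codeword is at
most `2/3`; equivalently, it decodes to an erasure with probability at least
`1/3`. -/
theorem stmt18 (Δ : Fin 5 → Bool) (hΔ : Δ ≠ fun _ => false) (b : Bool) :
    (((enc5 b).filter (fun c => dec5 (fun i => xor (c i) (Δ i)) ≠ none)).card : ℝ) / 3 ≤
        2 / 3 ∧
      (1 : ℝ) / 3 ≤
        (((enc5 b).filter (fun c => dec5 (fun i => xor (c i) (Δ i)) = none)).card : ℝ) / 3 := by
  obtain ⟨c, hc, hnone⟩ := exists_mem_enc5_dec5_xor_eq_none Δ hΔ b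
  have hvalid : #((enc5 b).filter (fun c => dec5 (fun i => xor (c i) (Δ i)) ≠ none)) < 3 :=
    card_enc5 b ▸ card_lt_card (filter_ssubset.2 ⟨c, hc, not_not.2 hnone⟩)
  have herased : 0 < #((enc5 b).filter (fun c => dec5 (fun i => xor (c i) (Δ i)) = none)) :=
    card_pos.2 ⟨c, mem_filter.2 ⟨hc, hnone⟩⟩
  constructor <;> gcongr
  · exact_mod_cast Nat.le_of_lt_succ hvalid
  · exact_mod_cast herased
end
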